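/- Let S be an Artinian commutative semiring, M an S-semimodule of finite length, and α : M → M an S-linear endomorphism. Then α is pseudoregular (i.e., im α = im α²) if and only if the restriction α_* : im α → im α of α to its image (well-defined since α maps im α into im α) is bijective. -/

import Mathlib

/-- The length of an `S`-semimodule `M`: the supremum of all `r : ℕ` such that there exists a
strictly increasing chain `M₀ ⊊ M₁ ⊊ ⋯ ⊊ M_r` of subsemimodules (i.e. `S`-submodules) of `M`. -/
noncomputable def semimoduleLength (S M : Type*) [Semiring S] [AddCommMonoid M]
    [Module S M] : ℕ∞ :=
  ⨆ r : {r : ℕ // ∃ c : Fin (r + 1) → Submodule S M, StrictMono c}, ((r : ℕ) : ℕ∞)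

/-- A commutative semiring `S` is Artinian if every finitely generated `S`-semimodule has
finite length. -/
def IsArtinianSemiring (S : Type u) [CommSemiring S] : Prop :=
  ∀ (M : Type u) [AddCommMonoid M] [Module S M], Module.Finite S M →
    semimoduleLength S M ≠ ⊤

/-! The restriction `β` of `α` to `N = im α` is surjective exactly when `im α = im α²`, so the
point is that a surjective endomorphism of `N` is injective. For semimodules kernels do not detect
injectivity; instead one uses the kernel pairs `Kₙ = {(x, y) | βⁿ x = βⁿ y} ⊆ N × N`. These increase
with `n`, hence stabilise once `N × N` has finite length, which is where the Artinian hypothesis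
enters: `N × N` is finitely generated (`N` has finite length, hence is Noetherian), so it is a
quotient of some `Sᵏ`. If `K_{n+1} = Kₙ` and `β x = β y`, write `x = βⁿ u`, `y = βⁿ v`; then
`(u, v) ∈ K_{n+1} = Kₙ`, i.e. `x = y`. -/

section Length

variable {S : Type*} [Semiring S] {M : Type*} [AddCommMonoid M] [Module S M]

lemma le_semimoduleLength {r : ℕ} {c : Fin (r + 1) → Submodule S M} (hc : StrictMono c) :
    (r : ℕ∞) ≤ semimoduleLength S M :=
  le_iSup (fun r : {r : ℕ // ∃ c : Fin (r + 1) → Submodule S M, StrictMono c} =>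
    ((r : ℕ) : ℕ∞)) ⟨r, c, hc⟩

lemma semimoduleLength_eq_top_of_strictMono {f : ℕ → Submodule S M} (hf : StrictMono f) :
    semimoduleLength S M = ⊤ :=
  ENat.eq_top_iff_forall_ge.2 fun _ => le_semimoduleLength (hf.comp Fin.val_strictMono)

lemma wellFoundedGT_of_semimoduleLength_ne_top (hM : semimoduleLength S M ≠ ⊤) :
    WellFoundedGT (Submodule S M) := by
  rw [WellFoundedGT, isWellFounded_iff, RelEmbedding.wellFounded_iff_isEmpty]
  exact ⟨fun f => hM (semimoduleLength_eq_top_of_strictMono fun _ _ h => f.map_rel_iff.2 h)⟩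

lemma isNoetherian_of_semimoduleLength_ne_top (hM : semimoduleLength S M ≠ ⊤) :
    IsNoetherian S M :=
  isNoetherian_iff'.2 (wellFoundedGT_of_semimoduleLength_ne_top hM)

lemma semimoduleLength_le_of_strictMono {N : Type*} [AddCommMonoid N] [Module S N]
    {F : Submodule S N → Submodule S M} (hF : StrictMono F) :
    semimoduleLength S N ≤ semimoduleLength S M :=
  iSup_le fun ⟨_, _, hc⟩ => le_semimoduleLength (hF.comp hc)

lemma semimoduleLength_le_of_surjective {N : Type*} [AddCommMonoid N] [Module S N]
    {f : M →ₗ[S] N} (hf : Function.Surjective f) :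
    semimoduleLength S N ≤ semimoduleLength S M :=
  semimoduleLength_le_of_strictMono (Submodule.comap_strictMono_of_surjective hf)

lemma semimoduleLength_submodule_le (N : Submodule S M) :
    semimoduleLength S N ≤ semimoduleLength S M :=
  semimoduleLength_le_of_strictMono
    (Submodule.map_strictMono_of_injective N.injective_subtype)

end Length

lemma IsArtinianSemiring.semimoduleLength_ne_top {S : Type u} [CommSemiring S]
    (hS : IsArtinianSemiring S) (M : Type*) [AddCommMonoid M] [Module S M] [Module.Finite S M] :
    semimoduleLength S M ≠ ⊤ := by
  obtain ⟨k, π, hπ⟩ := Module.Finite.exists_fin' S M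
  exact ne_top_of_le_ne_top (hS (Fin k → S) inferInstance) (semimoduleLength_le_of_surjective hπ)

namespace Module.End

variable {S : Type*} [Semiring S] {N : Type*} [AddCommMonoid N] [Module S N]

def iterateKernelPair (f : End S N) (n : ℕ) : Submodule S (N × N) :=
  LinearMap.eqLocus ((f ^ n) ∘ₗ LinearMap.fst S N N) ((f ^ n) ∘ₗ LinearMap.snd S N N)

lemma mem_iterateKernelPair {f : End S N} {n : ℕ} {p : N × N} :
    p ∈ f.iterateKernelPair n ↔ (f ^ n) p.1 = (f ^ n) p.2 :=
  Iff.rfl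

lemma iterateKernelPair_monotone (f : End S N) : Monotone f.iterateKernelPair :=
  monotone_nat_of_le_succ fun n p hp => by
    rw [mem_iterateKernelPair, pow_succ', mul_apply, mul_apply, mem_iterateKernelPair.1 hp]

lemma injective_of_surjective_of_wellFoundedGT_prod [WellFoundedGT (Submodule S (N × N))]
    {f : End S N} (hf : Function.Surjective f) : Function.Injective f := by
  obtain ⟨n, hn⟩ := WellFoundedGT.monotone_chain_condition ⟨_, f.iterateKernelPair_monotone⟩
  have hfn : Function.Surjective (f ^ n) := by
    rw [coe_pow]; exact hf.iterate n
  intro x y hxy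
  obtain ⟨u, rfl⟩ := hfn x
  obtain ⟨v, rfl⟩ := hfn y
  have huv : (u, v) ∈ f.iterateKernelPair (n + 1) := by
    rwa [mem_iterateKernelPair, pow_succ', mul_apply, mul_apply]
  exact (hn (n + 1) n.le_succ).ge huv

end Module.End

lemma LinearMap.range_eq_range_comp_self_iff_surjective_restrict {S M : Type*} [Semiring S]
    [AddCommMonoid M] [Module S M] (α : M →ₗ[S] M) :
    range α = range (α ∘ₗ α) ↔
      Function.Surjective (α.restrict (p := range α) (q := range α)
        (fun x _ => mem_range_self α x)) := by
  refine ⟨fun h ⟨_, hy⟩ => ?_, fun h => (range_comp_le_range α α).antisymm' ?_⟩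
  · obtain ⟨u, hu⟩ : _ ∈ range (α ∘ₗ α) := h ▸ hy
    exact ⟨⟨α u, mem_range_self α u⟩, Subtype.ext hu⟩
  · rintro y hy
    obtain ⟨⟨_, u, rfl⟩, hu⟩ := h ⟨y, hy⟩
    exact ⟨u, congrArg Subtype.val hu⟩

/-- Over an Artinian commutative semiring, an endomorphism `α` of a finite-length semimodule
is pseudoregular (`im α = im α²`) iff the restriction of `α` to its image is bijective. -/
theorem pseudoregular_iff_restrict_bijective {S : Type u} [CommSemiring S]
    (hS : IsArtinianSemiring S) {M : Type v} [AddCommMonoid M] [Module S M]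
    (hM : semimoduleLength S M ≠ ⊤) (α : M →ₗ[S] M) :
    LinearMap.range α = LinearMap.range (α ∘ₗ α) ↔
      Function.Bijective (α.restrict (p := LinearMap.range α) (q := LinearMap.range α)
        (fun x _ => LinearMap.mem_range_self α x)) := by
  rw [α.range_eq_range_comp_self_iff_surjective_restrict, Function.Bijective,
    and_iff_right_of_imp]
  have : IsNoetherian S (LinearMap.range α) := isNoetherian_of_semimoduleLength_ne_top
    (ne_top_of_le_ne_top hM (semimoduleLength_submodule_le _))
  have := wellFoundedGT_of_semimoduleLength_ne_top
    (hS.semimoduleLength_ne_top (LinearMap.range α × LinearMap.range α))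
  exact Module.End.injective_of_surjective_of_wellFoundedGT_prod
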